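/- Let n be a positive integer and a ≠ 0 a real number. For the planar vector field Z(r, w) = (r((2n+1)(1 + ar) − a(2n+1) r w^{2n} + r² w^{2n}), w(−1 + ar(−1 + w^{2n}))) obtained from the degenerate singular point of the chart U₂ by the blow-up x = w^{2n} r, z = w and division by the common factor w^{2n}, the zeros of Z on the line w = 0 are exactly the two points (0, 0) and (−1/a, 0); the Jacobian matrix of Z at (0, 0) is the diagonal matrix diag(2n+1, −1), so (0, 0) is a hyperbolic saddle, and the Jacobian matrix of Z at (−1/a, 0) is the diagonal matrix diag(−(2n+1), 0), so (−1/a, 0) is a semi-hyperbolic singular point. -/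

import Mathlib

/-- The vector field obtained from the degenerate singular point of the chart `U₂` by
the blow-up `x = w^(2n) r`, `z = w` and division by the common factor `w^(2n)`:
`Z (r, w) = (r ((2n+1)(1 + a r) - a (2n+1) r w^(2n) + r² w^(2n)),
             w (-1 + a r (-1 + w^(2n))))`. -/
noncomputable def blowUpField (n : ℕ) (a : ℝ) : ℝ × ℝ → ℝ × ℝ :=
  fun p => (p.1 * ((2 * n + 1) * (1 + a * p.1) - a * (2 * n + 1) * p.1 * p.2 ^ (2 * n)
              + p.1 ^ 2 * p.2 ^ (2 * n)),
            p.2 * (-1 + a * p.1 * (-1 + p.2 ^ (2 * n))))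

/-! Every monomial of the field containing `w ^ (2n)` vanishes to order `2n ≥ 2` on the axis
`w = 0`, so there the field and its Jacobian only see the terms without `w ^ (2n)`. -/

theorem hasFDerivAt_snd_pow_of_snd_eq_zero {E : Type*} [NormedAddCommGroup E] [NormedSpace ℝ E]
    {m : ℕ} (hm : 2 ≤ m) (x : E) :
    HasFDerivAt (fun p : E × ℝ => p.2 ^ m) (0 : E × ℝ →L[ℝ] ℝ) (x, 0) := by
  simpa [zero_pow (show m - 1 ≠ 0 by omega)] using
    (hasFDerivAt_snd (𝕜 := ℝ) (p := (x, (0 : ℝ)))).pow m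

theorem blowUpField_apply_axis {n : ℕ} (hn : 0 < n) (a r : ℝ) :
    blowUpField n a (r, 0) = ((2 * n + 1) * r * (1 + a * r), 0) := by
  simp only [blowUpField, zero_pow (show 2 * n ≠ 0 by omega)]
  ext <;> ring

theorem hasFDerivAt_blowUpField_axis {n : ℕ} (hn : 0 < n) (a r : ℝ) :
    HasFDerivAt (blowUpField n a)
      (ContinuousLinearMap.prodMap
        (((2 * n + 1 : ℝ) * (1 + 2 * a * r)) • ContinuousLinearMap.id ℝ ℝ)
        ((-1 - a * r) • ContinuousLinearMap.id ℝ ℝ)) (r, 0) := by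
  have hfst : HasFDerivAt (fun p : ℝ × ℝ => p.1) (ContinuousLinearMap.fst ℝ ℝ ℝ) (r, (0 : ℝ)) :=
    hasFDerivAt_fst
  have hpow : HasFDerivAt (fun p : ℝ × ℝ => p.2 ^ (2 * n)) 0 (r, (0 : ℝ)) :=
    hasFDerivAt_snd_pow_of_snd_eq_zero (by omega) r
  have hconst (c : ℝ) := hasFDerivAt_const (𝕜 := ℝ) c (r, (0 : ℝ))
  have hfirst := hfst.mul
    ((((hconst 1).add (hfst.const_mul a)).const_mul (2 * n + 1 : ℝ) |>.sub
      ((hfst.const_mul (a * (2 * n + 1))).mul hpow)).add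
      ((hfst.pow 2).mul hpow))
  have hsecond := (hasFDerivAt_snd (p := (r, (0 : ℝ)))).mul
    ((hconst (-1)).add ((hfst.const_mul a).mul ((hconst (-1)).add hpow)))
  refine (hfirst.prodMk hsecond).congr_fderiv ?_
  ext <;> simp [zero_pow (show 2 * n ≠ 0 by omega)] <;> ring

theorem one_add_mul_eq_zero_iff {a r : ℝ} (ha : a ≠ 0) : 1 + a * r = 0 ↔ r = -1 / a := by
  rw [eq_div_iff ha]
  constructor <;> intro h <;> linarith

/-- For `n ≥ 1` and `a ≠ 0`: the zeros of the blow-up field on the line `w = 0` are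
exactly `(0, 0)` and `(-1/a, 0)`; the Jacobian at `(0, 0)` is `diag (2n+1, -1)`,
whose eigenvalues `2n+1 > 0` and `-1 < 0` make it a hyperbolic saddle; the Jacobian at
`(-1/a, 0)` is `diag (-(2n+1), 0)`, with one nonzero eigenvalue `-(2n+1) ≠ 0` and one
zero eigenvalue, so `(-1/a, 0)` is a semi-hyperbolic singular point. -/
theorem blowUp_singular_points (n : ℕ) (hn : 0 < n) (a : ℝ) (ha : a ≠ 0) :
    (∀ r : ℝ, blowUpField n a (r, 0) = 0 ↔ (r = 0 ∨ r = -1 / a)) ∧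
    fderiv ℝ (blowUpField n a) (0, 0) =
      ContinuousLinearMap.prodMap
        (((2 * n + 1 : ℝ)) • ContinuousLinearMap.id ℝ ℝ)
        ((-1 : ℝ) • ContinuousLinearMap.id ℝ ℝ) ∧
    (0 : ℝ) < 2 * n + 1 ∧ (-1 : ℝ) < 0 ∧
    fderiv ℝ (blowUpField n a) (-1 / a, 0) =
      ContinuousLinearMap.prodMap
        ((-(2 * n + 1 : ℝ)) • ContinuousLinearMap.id ℝ ℝ)
        (0 : ℝ →L[ℝ] ℝ) ∧
    (-(2 * n + 1 : ℝ)) ≠ 0 := by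
  have hpos : (0 : ℝ) < 2 * n + 1 := by positivity
  refine ⟨fun r => ?_, ?_, hpos, by norm_num, ?_, by linarith⟩
  · rw [blowUpField_apply_axis hn, Prod.mk_eq_zero, ← one_add_mul_eq_zero_iff ha]
    simp [hpos.ne']
  · rw [(hasFDerivAt_blowUpField_axis hn a 0).fderiv]
    norm_num
  · rw [(hasFDerivAt_blowUpField_axis hn a (-1 / a)).fderiv]
    have hr : 1 + a * (-1 / a) = 0 := (one_add_mul_eq_zero_iff ha).2 rfl
    have h1 : (2 * n + 1 : ℝ) * (1 + 2 * a * (-1 / a)) = -(2 * n + 1) := by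
      linear_combination (2 * n + 1 : ℝ) * 2 * hr
    rw [h1, show -1 - a * (-1 / a) = 0 by linear_combination -hr, zero_smul]
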